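/- The axiom system E_0 ∪ {EL}, consisting of the axioms A0: x + 0 ≈ x, A1: x + y ≈ y + x, A2: (x + y) + z ≈ x + (y + z), A3: x + x ≈ x, together with all instances of the expansion-law schema EL, is sound and ground-complete modulo bisimilarity ∼_B over CCS (Hennessy–Milner theorem). -/

import Mathlib

/-- Actions: names, co-names and the silent action τ. -/
inductive Act (A : Type) : Type
  | name : A → Act A
  | coname : A → Act A
  | tau : Act A
  deriving DecidableEq

/-- Complementation of actions (`co` of τ is τ; it is only ever used on non-τ actions). -/
def Act.co {A : Type} : Act A → Act A
  | .name a => .coname a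
  | .coname a => .name a
  | .tau => .tau

/-- CCS terms: 0, variables, prefixing, choice and parallel composition. -/
inductive Tm (A : Type) : Type
  | nil : Tm A
  | var : ℕ → Tm A
  | pre : Act A → Tm A → Tm A
  | plus : Tm A → Tm A → Tm A
  | par : Tm A → Tm A → Tm A

/-- The SOS transition relation of CCS. -/
inductive Step {A : Type} : Tm A → Act A → Tm A → Prop
  | pre (μ : Act A) (t : Tm A) : Step (.pre μ t) μ t
  | plusL {t u t' : Tm A} {μ : Act A} : Step t μ t' → Step (.plus t u) μ t'
  | plusR {t u u' : Tm A} {μ : Act A} : Step u μ u' → Step (.plus t u) μ u'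
  | parL {t u t' : Tm A} {μ : Act A} : Step t μ t' → Step (.par t u) μ (.par t' u)
  | parR {t u u' : Tm A} {μ : Act A} : Step u μ u' → Step (.par t u) μ (.par t u')
  | comm {t u t' u' : Tm A} {α : Act A} : α ≠ Act.tau → Step t α t' → Step u α.co u' →
      Step (.par t u) .tau (.par t' u')

/-- A term is closed (a process) if no variable occurs in it. -/
def Closed {A : Type} : Tm A → Prop
  | .nil => True
  | .var _ => False
  | .pre _ t => Closed t
  | .plus t u => Closed t ∧ Closed u
  | .par t u => Closed t ∧ Closed u

/-- Applying a substitution to a term. -/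
def subst {A : Type} (σ : ℕ → Tm A) : Tm A → Tm A
  | .nil => .nil
  | .var x => σ x
  | .pre μ t => .pre μ (subst σ t)
  | .plus t u => .plus (subst σ t) (subst σ u)
  | .par t u => .par (subst σ t) (subst σ u)

/-- A substitution is closed if all its values are closed. -/
def ClosedSubst {A : Type} (σ : ℕ → Tm A) : Prop := ∀ x, Closed (σ x)

/-- `R` is a bisimulation (symmetric, with the transfer property). -/
def IsBisim {A : Type} (R : Tm A → Tm A → Prop) : Prop :=
  (∀ p q, R p q → R q p) ∧
  (∀ p q μ p', R p q → Step p μ p' → ∃ q', Step q μ q' ∧ R p' q')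

/-- Bisimilarity: the largest bisimulation. -/
def Bisim {A : Type} (p q : Tm A) : Prop := ∃ R, IsBisim R ∧ R p q

/-- Equations are pairs of terms. -/
abbrev Eqn (A : Type) := Tm A × Tm A

/-- Derivability in equational logic from the axiom system `E`. -/
inductive Deriv {A : Type} (E : Set (Eqn A)) : Tm A → Tm A → Prop
  | ax {t u : Tm A} (σ : ℕ → Tm A) (h : (t, u) ∈ E) : Deriv E (subst σ t) (subst σ u)
  | refl (t : Tm A) : Deriv E t t
  | symm {t u : Tm A} (h : Deriv E t u) : Deriv E u t
  | trans {t u v : Tm A} (h₁ : Deriv E t u) (h₂ : Deriv E u v) : Deriv E t v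
  | pre (μ : Act A) {t u : Tm A} (h : Deriv E t u) : Deriv E (.pre μ t) (.pre μ u)
  | plus {t u t' u' : Tm A} (h₁ : Deriv E t u) (h₂ : Deriv E t' u') :
      Deriv E (.plus t t') (.plus u u')
  | par {t u t' u' : Tm A} (h₁ : Deriv E t u) (h₂ : Deriv E t' u') :
      Deriv E (.par t t') (.par u u')

/-- An equation is sound modulo `sim` if all its closed instances are related by `sim`. -/
def EqnSound {A : Type} (sim : Tm A → Tm A → Prop) (t u : Tm A) : Prop :=
  ∀ σ : ℕ → Tm A, ClosedSubst σ → sim (subst σ t) (subst σ u)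

/-- An axiom system is sound modulo `sim` if each of its equations is. -/
def SystemSound {A : Type} (sim : Tm A → Tm A → Prop) (E : Set (Eqn A)) : Prop :=
  ∀ e ∈ E, EqnSound sim e.1 e.2

/-- An axiom system is ground-complete modulo `sim` if it derives every valid
closed equation. -/
def GroundComplete {A : Type} (sim : Tm A → Tm A → Prop) (E : Set (Eqn A)) : Prop :=
  ∀ p q : Tm A, Closed p → Closed q → sim p q → Deriv E p q

/-- `sumF g n` is the sum `g 1 + ⋯ + g n` (empty sum being 0, no padding for `n = 1`). -/
def sumF {A : Type} (g : ℕ → Tm A) : ℕ → Tm A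
  | 0 => .nil
  | 1 => g 1
  | n + 2 => .plus (sumF g (n + 1)) (g (n + 2))

/-- The basic axioms A0–A3 for choice. -/
def E0 (A : Type) : Set (Eqn A) :=
  { (.plus (.var 0) .nil, .var 0),
    (.plus (.var 0) (.var 1), .plus (.var 1) (.var 0)),
    (.plus (.plus (.var 0) (.var 1)) (.var 2), .plus (.var 0) (.plus (.var 1) (.var 2))),
    (.plus (.var 0) (.var 0), .var 0) }

/-- Sum of a list of terms (the empty sum being 0). -/
def listSum {A : Type} : List (Tm A) → Tm A
  | [] => .nil
  | [t] => t
  | t :: u :: ts => .plus t (listSum (u :: ts))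

/-- `prefixed I` is the term `Σ_{(μ,x) ∈ I} μ.x`. -/
def prefixed {A : Type} (I : List (Act A × ℕ)) : Tm A :=
  listSum (I.map fun p => Tm.pre p.1 (.var p.2))

/-- Left-hand side of the expansion law for index lists `I`, `J`. -/
def elLhs {A : Type} (I J : List (Act A × ℕ)) : Tm A :=
  .par (prefixed I) (prefixed J)

/-- Right-hand side of the expansion law for index lists `I`, `J`. -/
def elRhs {A : Type} [DecidableEq A] (I J : List (Act A × ℕ)) : Tm A :=
  listSum
    ((I.map fun p => Tm.pre p.1 (.par (.var p.2) (prefixed J))) ++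
     (J.map fun q => Tm.pre q.1 (.par (prefixed I) (.var q.2))) ++
     (I.flatMap fun p =>
        (J.filter fun q => decide (p.1 ≠ Act.tau ∧ p.1 = q.1.co)).map fun q =>
          Tm.pre .tau (.par (.var p.2) (.var q.2))))

/-- The expansion-law schema EL: all its instances with finite index lists and
pairwise distinct variables. -/
def EL (A : Type) [DecidableEq A] : Set (Eqn A) :=
  { e | ∃ I J : List (Act A × ℕ),
      (I.map Prod.snd ++ J.map Prod.snd).Nodup ∧
      e = (elLhs I J, elRhs I J) }

/-!
Soundness: on both sides of a closed instance of an axiom the transitions are literally the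
same (for EL because the transitions of `Σ μᵢ.pᵢ ‖ Σ νⱼ.qⱼ` are exactly the summands of its
expansion), and bisimilarity is a congruence, so derivations preserve it.

Completeness: using EL to eliminate `‖` between head normal forms, every process is provably
equal to a sum `Σ μᵢ.pᵢ` whose continuations `pᵢ` have smaller depth. If two such sums are
bisimilar, each summand `μ.p` of one is matched by a summand `μ.q` of the other with `p ∼ q`,
so `p ≈ q` by induction on the sum of the depths; A0–A3 then let each sum absorb the other.
-/

section Semantics

variable {A : Type}

theorem Act.co_co (α : Act A) : α.co.co = α := by cases α <;> rfl

theorem not_step_nil {μ : Act A} {t : Tm A} : ¬ Step .nil μ t := nofun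

theorem step_pre_iff {ν μ : Act A} {s t : Tm A} :
    Step (.pre ν s) μ t ↔ μ = ν ∧ t = s := by
  constructor
  · rintro ⟨⟩; exact ⟨rfl, rfl⟩
  · rintro ⟨rfl, rfl⟩; exact .pre _ _

theorem step_plus_iff {s u t : Tm A} {μ : Act A} :
    Step (.plus s u) μ t ↔ Step s μ t ∨ Step u μ t := by
  constructor
  · intro h
    cases h with
    | plusL h => exact .inl h
    | plusR h => exact .inr h
  · rintro (h | h)
    exacts [.plusL h, .plusR h]

theorem step_par_iff {s u t : Tm A} {μ : Act A} :
    Step (.par s u) μ t ↔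
      (∃ s', Step s μ s' ∧ t = .par s' u) ∨
      (∃ u', Step u μ u' ∧ t = .par s u') ∨
      (∃ α s' u', α ≠ .tau ∧ μ = .tau ∧ Step s α s' ∧ Step u α.co u' ∧ t = .par s' u') := by
  constructor
  · intro h
    cases h with
    | parL h => exact .inl ⟨_, h, rfl⟩
    | parR h => exact .inr (.inl ⟨_, h, rfl⟩)
    | comm hα h₁ h₂ => exact .inr (.inr ⟨_, _, _, hα, rfl, h₁, h₂, rfl⟩)
  · rintro (⟨s', h, rfl⟩ | ⟨u', h, rfl⟩ | ⟨α, s', u', hα, rfl, h₁, h₂, rfl⟩)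
    exacts [.parL h, .parR h, .comm hα h₁ h₂]

theorem step_listSum_cons {s : Tm A} {ts : List (Tm A)} {μ : Act A} {t : Tm A} :
    Step (listSum (s :: ts)) μ t ↔ Step s μ t ∨ Step (listSum ts) μ t := by
  cases ts with
  | nil => simp [listSum, not_step_nil]
  | cons _ _ => exact step_plus_iff

/-- The head normal form `Σ_{(μ, t) ∈ L} μ.t`. -/
def sumPre (L : List (Act A × Tm A)) : Tm A :=
  listSum (L.map fun e => .pre e.1 e.2)

theorem step_sumPre_iff {L : List (Act A × Tm A)} {μ : Act A} {t : Tm A} :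
    Step (sumPre L) μ t ↔ (μ, t) ∈ L := by
  induction L with
  | nil => simp [sumPre, listSum, not_step_nil]
  | cons e L ih =>
    rw [sumPre, List.map_cons, step_listSum_cons, step_pre_iff, ← sumPre, ih, List.mem_cons,
      Prod.ext_iff]

end Semantics

section Bisimilarity

variable {A : Type} {p q p' q' : Tm A}

theorem Bisim.refl (p : Tm A) : Bisim p p :=
  ⟨Eq, ⟨fun _ _ h => h.symm, fun _ _ _ p' h hs => ⟨p', h ▸ hs, rfl⟩⟩, rfl⟩

theorem Bisim.symm (h : Bisim p q) : Bisim q p :=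
  let ⟨R, hR, hpq⟩ := h
  ⟨R, hR, hR.1 _ _ hpq⟩

theorem Bisim.exists_step (h : Bisim p q) {μ : Act A} (hs : Step p μ p') :
    ∃ q', Step q μ q' ∧ Bisim p' q' :=
  let ⟨R, hR, hpq⟩ := h
  let ⟨q', hq, hr⟩ := hR.2 _ _ _ _ hpq hs
  ⟨q', hq, R, hR, hr⟩

theorem Bisim.trans {r : Tm A} (h₁ : Bisim p q) (h₂ : Bisim q r) : Bisim p r := by
  refine ⟨fun a c => ∃ b, Bisim a b ∧ Bisim b c, ⟨?_, ?_⟩, q, h₁, h₂⟩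
  · rintro a c ⟨b, hab, hbc⟩
    exact ⟨b, hbc.symm, hab.symm⟩
  · rintro a c μ a' ⟨b, hab, hbc⟩ hs
    obtain ⟨b', hb, hab'⟩ := hab.exists_step hs
    obtain ⟨c', hc, hbc'⟩ := hbc.exists_step hb
    exact ⟨c', hc, b', hab', hbc'⟩

theorem Bisim.of_forall_step
    (h₁ : ∀ μ p', Step p μ p' → ∃ q', Step q μ q' ∧ Bisim p' q')
    (h₂ : ∀ μ q', Step q μ q' → ∃ p', Step p μ p' ∧ Bisim q' p') : Bisim p q := by
  refine ⟨fun a b => Bisim a b ∨ (a = p ∧ b = q) ∨ (a = q ∧ b = p), ⟨?_, ?_⟩, .inr (.inl ⟨rfl, rfl⟩)⟩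
  · rintro a b (h | ⟨rfl, rfl⟩ | ⟨rfl, rfl⟩)
    exacts [.inl h.symm, .inr (.inr ⟨rfl, rfl⟩), .inr (.inl ⟨rfl, rfl⟩)]
  · rintro a b μ a' (h | ⟨rfl, rfl⟩ | ⟨rfl, rfl⟩) hs
    · obtain ⟨b', hb, h'⟩ := h.exists_step hs
      exact ⟨b', hb, .inl h'⟩
    · obtain ⟨b', hb, h'⟩ := h₁ μ a' hs
      exact ⟨b', hb, .inl h'⟩
    · obtain ⟨b', hb, h'⟩ := h₂ μ a' hs
      exact ⟨b', hb, .inl h'⟩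

theorem Bisim.of_step_iff (h : ∀ μ t, Step p μ t ↔ Step q μ t) : Bisim p q :=
  .of_forall_step (fun μ p' hs => ⟨p', (h μ p').1 hs, .refl _⟩)
    (fun μ q' hs => ⟨q', (h μ q').2 hs, .refl _⟩)

theorem Bisim.pre (μ : Act A) (h : Bisim p q) : Bisim (.pre μ p) (.pre μ q) := by
  refine .of_forall_step (fun ν r hs => ?_) (fun ν r hs => ?_) <;>
    obtain ⟨rfl, rfl⟩ := step_pre_iff.1 hs
  exacts [⟨q, .pre _ _, h⟩, ⟨p, .pre _ _, h.symm⟩]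

theorem Bisim.plus (h₁ : Bisim p q) (h₂ : Bisim p' q') : Bisim (.plus p p') (.plus q q') := by
  have transfer : ∀ {p q p' q' : Tm A}, Bisim p q → Bisim p' q' → ∀ μ r, Step (.plus p p') μ r →
      ∃ r', Step (.plus q q') μ r' ∧ Bisim r r' := by
    intro p q p' q' h₁ h₂ μ r hs
    rcases step_plus_iff.1 hs with hs | hs
    · obtain ⟨r', hr, h⟩ := h₁.exists_step hs
      exact ⟨r', .plusL hr, h⟩
    · obtain ⟨r', hr, h⟩ := h₂.exists_step hs
      exact ⟨r', .plusR hr, h⟩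
  exact .of_forall_step (transfer h₁ h₂) (transfer h₁.symm h₂.symm)

theorem Bisim.par (h₁ : Bisim p q) (h₂ : Bisim p' q') : Bisim (.par p p') (.par q q') := by
  refine ⟨fun x y => ∃ a b c d, x = .par a b ∧ y = .par c d ∧ Bisim a c ∧ Bisim b d,
    ⟨?_, ?_⟩, p, p', q, q', rfl, rfl, h₁, h₂⟩
  · rintro x y ⟨a, b, c, d, rfl, rfl, hac, hbd⟩
    exact ⟨c, d, a, b, rfl, rfl, hac.symm, hbd.symm⟩
  · rintro x y μ x' ⟨a, b, c, d, rfl, rfl, hac, hbd⟩ hs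
    rcases step_par_iff.1 hs with ⟨a', ha, rfl⟩ | ⟨b', hb, rfl⟩ | ⟨α, a', b', hα, rfl, ha, hb, rfl⟩
    · obtain ⟨c', hc, h⟩ := hac.exists_step ha
      exact ⟨.par c' d, .parL hc, a', b, c', d, rfl, rfl, h, hbd⟩
    · obtain ⟨d', hd, h⟩ := hbd.exists_step hb
      exact ⟨.par c d', .parR hd, a, b', c, d', rfl, rfl, hac, h⟩
    · obtain ⟨c', hc, h⟩ := hac.exists_step ha
      obtain ⟨d', hd, h'⟩ := hbd.exists_step hb
      exact ⟨.par c' d', .comm hα hc hd, a', b', c', d', rfl, rfl, h, h'⟩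

end Bisimilarity

section Substitution

variable {A : Type}

theorem closed_subst {σ : ℕ → Tm A} (hσ : ClosedSubst σ) (t : Tm A) : Closed (subst σ t) := by
  induction t with
  | nil => trivial
  | var x => exact hσ x
  | pre _ _ ih => exact ih
  | plus _ _ ih₁ ih₂ | par _ _ ih₁ ih₂ => exact ⟨ih₁, ih₂⟩

theorem subst_eq_self_of_closed {t : Tm A} (ht : Closed t) (σ : ℕ → Tm A) : subst σ t = t := by
  induction t with
  | nil => rfl
  | var x => exact ht.elim
  | pre _ _ ih => rw [subst, ih ht]
  | plus _ _ ih₁ ih₂ | par _ _ ih₁ ih₂ => rw [subst, ih₁ ht.1, ih₂ ht.2]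

theorem subst_subst (σ τ : ℕ → Tm A) (t : Tm A) :
    subst σ (subst τ t) = subst (fun x => subst σ (τ x)) t := by
  induction t with
  | nil | var _ => rfl
  | pre _ _ ih => rw [subst, subst, subst, ih]
  | plus _ _ ih₁ ih₂ | par _ _ ih₁ ih₂ => rw [subst, subst, subst, ih₁, ih₂]

theorem subst_listSum (σ : ℕ → Tm A) (ts : List (Tm A)) :
    subst σ (listSum ts) = listSum (ts.map (subst σ)) := by
  induction ts with
  | nil => rfl
  | cons t ts ih =>
    cases ts with
    | nil => rfl
    | cons u us => rw [listSum, subst, ih]; rfl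

theorem subst_prefixed (σ : ℕ → Tm A) (I : List (Act A × ℕ)) :
    subst σ (prefixed I) = sumPre (I.map fun i => (i.1, σ i.2)) := by
  simp only [prefixed, sumPre, subst_listSum, List.map_map]
  rfl

theorem subst_elLhs (σ : ℕ → Tm A) (I J : List (Act A × ℕ)) :
    subst σ (elLhs I J) =
      .par (sumPre (I.map fun i => (i.1, σ i.2))) (sumPre (J.map fun j => (j.1, σ j.2))) := by
  rw [elLhs, subst, subst_prefixed, subst_prefixed]

end Substitution

section Soundness

variable {A : Type}

theorem Deriv.eqnSound {E : Set (Eqn A)} (hE : SystemSound Bisim E) {t u : Tm A}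
    (h : Deriv E t u) : EqnSound Bisim t u := by
  induction h with
  | ax τ he =>
    intro σ hσ
    rw [subst_subst, subst_subst]
    exact hE _ he _ fun x => closed_subst hσ (τ x)
  | refl t => exact fun σ _ => .refl _
  | symm _ ih => exact fun σ hσ => (ih σ hσ).symm
  | trans _ _ ih₁ ih₂ => exact fun σ hσ => (ih₁ σ hσ).trans (ih₂ σ hσ)
  | pre μ _ ih => exact fun σ hσ => (ih σ hσ).pre μ
  | plus _ _ ih₁ ih₂ => exact fun σ hσ => (ih₁ σ hσ).plus (ih₂ σ hσ)
  | par _ _ ih₁ ih₂ => exact fun σ hσ => (ih₁ σ hσ).par (ih₂ σ hσ)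

theorem Deriv.bisim {E : Set (Eqn A)} (hE : SystemSound Bisim E) {p q : Tm A}
    (h : Deriv E p q) (hp : Closed p) (hq : Closed q) : Bisim p q := by
  simpa only [subst_eq_self_of_closed hp, subst_eq_self_of_closed hq] using
    h.eqnSound hE (fun _ => .nil) fun _ => trivial

theorem eqnSound_of_step_iff {t u : Tm A}
    (h : ∀ σ μ r, Step (subst σ t) μ r ↔ Step (subst σ u) μ r) : EqnSound Bisim t u :=
  fun σ _ => .of_step_iff (h σ)

theorem systemSound_E0 : SystemSound Bisim (E0 A) := by
  simp only [SystemSound, E0, Set.mem_insert_iff, Set.mem_singleton_iff, forall_eq_or_imp,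
    forall_eq]
  refine ⟨?_, ?_, ?_, ?_⟩ <;> refine eqnSound_of_step_iff fun σ μ r => ?_ <;>
    simp only [subst, step_plus_iff, not_step_nil, or_false] <;> tauto

variable [DecidableEq A]

/-- The summands of the expansion of `sumPre L ‖ sumPre M`, in the order of `elRhs`. -/
def expand (L M : List (Act A × Tm A)) : List (Act A × Tm A) :=
  (L.map fun e => (e.1, .par e.2 (sumPre M))) ++
  (M.map fun f => (f.1, .par (sumPre L) f.2)) ++
  (L.flatMap fun e =>
    (M.filter fun f => decide (e.1 ≠ .tau ∧ e.1 = f.1.co)).map fun f => (.tau, .par e.2 f.2))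

theorem mem_expand {L M : List (Act A × Tm A)} {μ : Act A} {t : Tm A} :
    (μ, t) ∈ expand L M ↔
      (∃ e ∈ L, μ = e.1 ∧ t = .par e.2 (sumPre M)) ∨
      (∃ f ∈ M, μ = f.1 ∧ t = .par (sumPre L) f.2) ∨
      (∃ e ∈ L, ∃ f ∈ M, e.1 ≠ .tau ∧ e.1 = f.1.co ∧ μ = .tau ∧ t = .par e.2 f.2) := by
  simp only [expand, List.mem_append, List.mem_map, List.mem_flatMap, List.mem_filter,
    decide_eq_true_eq, Prod.mk.injEq, or_assoc]
  grind

theorem step_par_sumPre_iff {L M : List (Act A × Tm A)} {μ : Act A} {t : Tm A} :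
    Step (.par (sumPre L) (sumPre M)) μ t ↔ Step (sumPre (expand L M)) μ t := by
  rw [step_par_iff, step_sumPre_iff, mem_expand]
  constructor
  · rintro (⟨s', h, rfl⟩ | ⟨u', h, rfl⟩ | ⟨α, s', u', hα, rfl, h₁, h₂, rfl⟩)
    · exact .inl ⟨(μ, s'), step_sumPre_iff.1 h, rfl, rfl⟩
    · exact .inr (.inl ⟨(μ, u'), step_sumPre_iff.1 h, rfl, rfl⟩)
    · exact .inr (.inr ⟨(α, s'), step_sumPre_iff.1 h₁, (α.co, u'), step_sumPre_iff.1 h₂, hα,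
        α.co_co.symm, rfl, rfl⟩)
  · rintro (⟨e, he, rfl, rfl⟩ | ⟨f, hf, rfl, rfl⟩ | ⟨e, he, f, hf, hτ, hco, rfl, rfl⟩)
    · exact .inl ⟨e.2, step_sumPre_iff.2 he, rfl⟩
    · exact .inr (.inl ⟨f.2, step_sumPre_iff.2 hf, rfl⟩)
    · refine .inr (.inr ⟨e.1, e.2, f.2, hτ, rfl, step_sumPre_iff.2 he, step_sumPre_iff.2 ?_, rfl⟩)
      rwa [hco, Act.co_co]

theorem subst_elRhs (σ : ℕ → Tm A) (I J : List (Act A × ℕ)) :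
    subst σ (elRhs I J) =
      sumPre (expand (I.map fun i => (i.1, σ i.2)) (J.map fun j => (j.1, σ j.2))) := by
  simp only [elRhs, expand, sumPre, subst_listSum, List.map_append, List.map_map,
    List.map_flatMap, List.flatMap_map, List.filter_map, Function.comp_def, subst, prefixed]

theorem systemSound_EL : SystemSound Bisim (EL A) := by
  rintro _ ⟨I, J, -, rfl⟩
  refine eqnSound_of_step_iff fun σ μ r => ?_
  rw [subst_elLhs, subst_elRhs]
  exact step_par_sumPre_iff

end Soundness

section Derivations

variable {A : Type} {E : Set (Eqn A)}

instance : Trans (Deriv E) (Deriv E) (Deriv E) := ⟨Deriv.trans⟩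

theorem Deriv.plus_nil (hE : E0 A ⊆ E) (t : Tm A) : Deriv E (.plus t .nil) t := by
  simpa [subst] using
    Deriv.ax (t := .plus (.var 0) .nil) (u := .var 0) (fun _ => t) (hE (by simp [E0]))

theorem Deriv.plus_comm (hE : E0 A ⊆ E) (t u : Tm A) : Deriv E (.plus t u) (.plus u t) := by
  simpa [subst] using Deriv.ax (t := .plus (.var 0) (.var 1)) (u := .plus (.var 1) (.var 0))
    (fun x => if x = 0 then t else u) (hE (by simp [E0]))

theorem Deriv.plus_assoc (hE : E0 A ⊆ E) (t u v : Tm A) :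
    Deriv E (.plus (.plus t u) v) (.plus t (.plus u v)) := by
  simpa [subst] using
    Deriv.ax (t := .plus (.plus (.var 0) (.var 1)) (.var 2))
      (u := .plus (.var 0) (.plus (.var 1) (.var 2)))
      (fun x => if x = 0 then t else if x = 1 then u else v) (hE (by simp [E0]))

theorem Deriv.plus_idem (hE : E0 A ⊆ E) (t : Tm A) : Deriv E (.plus t t) t := by
  simpa [subst] using
    Deriv.ax (t := .plus (.var 0) (.var 0)) (u := .var 0) (fun _ => t) (hE (by simp [E0]))

theorem Deriv.listSum_cons (hE : E0 A ⊆ E) (t : Tm A) (ts : List (Tm A)) :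
    Deriv E (listSum (t :: ts)) (.plus t (listSum ts)) := by
  cases ts with
  | nil => exact (plus_nil hE t).symm
  | cons _ _ => exact .refl _

theorem Deriv.listSum_append (hE : E0 A ⊆ E) (ts us : List (Tm A)) :
    Deriv E (listSum (ts ++ us)) (.plus (listSum ts) (listSum us)) := by
  induction ts with
  | nil => exact ((plus_comm hE _ _).trans (plus_nil hE _)).symm
  | cons t ts ih =>
    calc Deriv E (listSum (t :: ts ++ us)) (.plus t (listSum (ts ++ us))) := listSum_cons hE _ _
      Deriv E _ (.plus t (.plus (listSum ts) (listSum us))) := (refl t).plus ih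
      Deriv E _ (.plus (.plus t (listSum ts)) (listSum us)) := (plus_assoc hE _ _ _).symm
      Deriv E _ (.plus (listSum (t :: ts)) (listSum us)) := (listSum_cons hE t ts).symm.plus (refl _)

theorem Deriv.plus_listSum_of_mem (hE : E0 A ⊆ E) {u : Tm A} {us : List (Tm A)} (hu : u ∈ us) :
    Deriv E (.plus u (listSum us)) (listSum us) := by
  induction us with
  | nil => cases hu
  | cons v us ih =>
    have hv := listSum_cons hE v us
    refine ((refl u).plus hv).trans (.trans (plus_assoc hE _ _ _).symm ?_)
    rcases List.mem_cons.1 hu with rfl | hu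
    · exact ((plus_idem hE u).plus (refl _)).trans hv.symm
    · calc Deriv E (.plus (.plus u v) (listSum us)) (.plus (.plus v u) (listSum us)) :=
            (plus_comm hE u v).plus (refl _)
        Deriv E _ (.plus v (.plus u (listSum us))) := plus_assoc hE _ _ _
        Deriv E _ (listSum (v :: us)) := ((refl v).plus (ih hu)).trans hv.symm

theorem Deriv.plus_listSum_of_forall_exists (hE : E0 A ⊆ E) {ts us : List (Tm A)}
    (h : ∀ t ∈ ts, ∃ u ∈ us, Deriv E t u) :
    Deriv E (.plus (listSum ts) (listSum us)) (listSum us) := by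
  induction ts with
  | nil => exact (plus_comm hE _ _).trans (plus_nil hE _)
  | cons t ts ih =>
    obtain ⟨u, hu, htu⟩ := h t List.mem_cons_self
    calc Deriv E (.plus (listSum (t :: ts)) (listSum us)) (.plus t (.plus (listSum ts) (listSum us))) :=
          ((listSum_cons hE t ts).plus (refl _)).trans (plus_assoc hE _ _ _)
      Deriv E _ (.plus u (listSum us)) := htu.plus (ih fun s hs => h s (List.mem_cons_of_mem _ hs))
      Deriv E _ (listSum us) := plus_listSum_of_mem hE hu

theorem Deriv.listSum_of_forall_exists (hE : E0 A ⊆ E) {ts us : List (Tm A)}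
    (h₁ : ∀ t ∈ ts, ∃ u ∈ us, Deriv E t u) (h₂ : ∀ u ∈ us, ∃ t ∈ ts, Deriv E u t) :
    Deriv E (listSum ts) (listSum us) :=
  (plus_listSum_of_forall_exists hE h₂).symm.trans
    ((plus_comm hE _ _).trans (plus_listSum_of_forall_exists hE h₁))

theorem Deriv.sumPre_append (hE : E0 A ⊆ E) (L M : List (Act A × Tm A)) :
    Deriv E (sumPre (L ++ M)) (.plus (sumPre L) (sumPre M)) := by
  simpa only [sumPre, List.map_append] using listSum_append hE _ _

theorem Deriv.sumPre_of_bisim (hE : E0 A ⊆ E) {L M : List (Act A × Tm A)}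
    (hLM : Bisim (sumPre L) (sumPre M))
    (ih : ∀ e ∈ L, ∀ f ∈ M, Bisim e.2 f.2 → Deriv E e.2 f.2) :
    Deriv E (sumPre L) (sumPre M) := by
  refine listSum_of_forall_exists hE ?_ ?_ <;> simp only [List.mem_map] <;>
    rintro _ ⟨e, he, rfl⟩
  · obtain ⟨t, ht, he'⟩ := hLM.exists_step (step_sumPre_iff.2 he)
    have ht := step_sumPre_iff.1 ht
    exact ⟨_, ⟨_, ht, rfl⟩, .pre _ (ih e he _ ht he')⟩
  · obtain ⟨t, ht, he'⟩ := hLM.symm.exists_step (step_sumPre_iff.2 he)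
    have ht := step_sumPre_iff.1 ht
    exact ⟨_, ⟨_, ht, rfl⟩, .pre _ (ih _ ht e he he'.symm).symm⟩

end Derivations

section HeadNormalForms

variable {A : Type}

-- Additive on `‖`, so that the continuations in the expansion of `p ‖ q` are shallower than it.
def Tm.depth : Tm A → ℕ
  | .nil | .var _ => 0
  | .pre _ t => t.depth + 1
  | .plus t u => max t.depth u.depth
  | .par t u => t.depth + u.depth

theorem closed_listSum {ts : List (Tm A)} (h : ∀ t ∈ ts, Closed t) : Closed (listSum ts) := by
  induction ts with
  | nil => trivial
  | cons t ts ih =>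
    cases ts with
    | nil => exact h t List.mem_cons_self
    | cons _ _ => exact ⟨h t List.mem_cons_self, ih fun s hs => h s (List.mem_cons_of_mem _ hs)⟩

theorem depth_listSum_le {ts : List (Tm A)} {n : ℕ} (h : ∀ t ∈ ts, t.depth ≤ n) :
    (listSum ts).depth ≤ n := by
  induction ts with
  | nil => exact n.zero_le
  | cons t ts ih =>
    cases ts with
    | nil => exact h t List.mem_cons_self
    | cons _ _ =>
      exact max_le (h t List.mem_cons_self) (ih fun s hs => h s (List.mem_cons_of_mem _ hs))

theorem closed_sumPre {L : List (Act A × Tm A)} (h : ∀ e ∈ L, Closed e.2) : Closed (sumPre L) :=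
  closed_listSum fun t ht => by
    obtain ⟨e, he, rfl⟩ := List.mem_map.1 ht
    exact h e he

theorem depth_sumPre_le {L : List (Act A × Tm A)} {n : ℕ} (h : ∀ e ∈ L, e.2.depth < n) :
    (sumPre L).depth ≤ n :=
  depth_listSum_le fun t ht => by
    obtain ⟨e, he, rfl⟩ := List.mem_map.1 ht
    exact h e he

/-- Pairs the `i`-th action of `L` with the variable `k + i`, making `sumPre L` an instance of
`prefixed (indexVars L k)`. -/
def indexVars (L : List (Act A × Tm A)) (k : ℕ) : List (Act A × ℕ) :=
  L.mapIdx fun i e => (e.1, k + i)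

theorem map_snd_indexVars (L : List (Act A × Tm A)) (k : ℕ) :
    (indexVars L k).map Prod.snd = List.range' k L.length :=
  List.ext_getElem (by simp [indexVars]) fun i _ _ => by simp [indexVars]

theorem map_indexVars {L : List (Act A × Tm A)} {k : ℕ} {σ : ℕ → Tm A}
    (hσ : ∀ i (hi : i < L.length), σ (k + i) = L[i].2) :
    (indexVars L k).map (fun j => (j.1, σ j.2)) = L :=
  List.ext_getElem (by simp [indexVars]) fun i _ hi => by simp [indexVars, hσ i hi]

variable [DecidableEq A]

theorem closed_depth_expand {L M : List (Act A × Tm A)} {m n : ℕ}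
    (hL : ∀ e ∈ L, Closed e.2 ∧ e.2.depth < m) (hM : ∀ f ∈ M, Closed f.2 ∧ f.2.depth < n) :
    ∀ e ∈ expand L M, Closed e.2 ∧ e.2.depth < m + n := by
  have hLc := closed_sumPre fun e he => (hL e he).1
  have hMc := closed_sumPre fun f hf => (hM f hf).1
  have hLd := depth_sumPre_le fun e he => (hL e he).2
  have hMd := depth_sumPre_le fun f hf => (hM f hf).2
  rintro ⟨μ, t⟩ het
  rcases mem_expand.1 het with ⟨e, he, -, rfl⟩ | ⟨f, hf, -, rfl⟩ | ⟨e, he, f, hf, -, -, -, rfl⟩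
  · obtain ⟨hc, hd⟩ := hL e he
    exact ⟨⟨hc, hMc⟩, by simp only [Tm.depth]; omega⟩
  · obtain ⟨hc, hd⟩ := hM f hf
    exact ⟨⟨hLc, hc⟩, by simp only [Tm.depth]; omega⟩
  · obtain ⟨hc, hd⟩ := hL e he
    obtain ⟨hc', hd'⟩ := hM f hf
    exact ⟨⟨hc, hc'⟩, by simp only [Tm.depth]; omega⟩

theorem Deriv.par_sumPre {E : Set (Eqn A)} (hE : EL A ⊆ E) (L M : List (Act A × Tm A)) :
    Deriv E (.par (sumPre L) (sumPre M)) (sumPre (expand L M)) := by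
  let σ : ℕ → Tm A := fun x => ((L ++ M).getD x (.tau, .nil)).2
  have hL : (indexVars L 0).map (fun j => (j.1, σ j.2)) = L :=
    map_indexVars fun i hi => by simp [σ, List.getElem?_append_left hi, hi]
  have hM : (indexVars M L.length).map (fun j => (j.1, σ j.2)) = M :=
    map_indexVars fun i hi => by simp [σ, hi]
  have hnd : ((indexVars L 0).map Prod.snd ++ (indexVars M L.length).map Prod.snd).Nodup := by
    have hrange := List.range'_append_1 (s := 0) (m := L.length) (n := M.length)
    rw [Nat.zero_add] at hrange
    rw [map_snd_indexVars, map_snd_indexVars, hrange]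
    exact List.nodup_range'
  simpa only [subst_elLhs, subst_elRhs, hL, hM] using Deriv.ax σ (hE ⟨_, _, hnd, rfl⟩)

theorem exists_deriv_sumPre {E : Set (Eqn A)} (hE₀ : E0 A ⊆ E) (hEL : EL A ⊆ E) {p : Tm A}
    (hp : Closed p) :
    ∃ L : List (Act A × Tm A), (∀ e ∈ L, Closed e.2 ∧ e.2.depth < p.depth) ∧
      Deriv E p (sumPre L) := by
  induction p with
  | nil => exact ⟨[], by simp, .refl _⟩
  | var x => exact hp.elim
  | pre μ t _ =>
    refine ⟨[(μ, t)], fun e he => ?_, .refl _⟩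
    rw [List.mem_singleton.1 he]
    exact ⟨hp, Nat.lt_add_one _⟩
  | plus t u iht ihu =>
    obtain ⟨L, hL, ht⟩ := iht hp.1
    obtain ⟨M, hM, hu⟩ := ihu hp.2
    refine ⟨L ++ M, ?_, (ht.plus hu).trans (Deriv.sumPre_append hE₀ L M).symm⟩
    simp only [List.mem_append, Tm.depth]
    rintro e (he | he)
    exacts [⟨(hL e he).1, lt_max_of_lt_left (hL e he).2⟩,
      ⟨(hM e he).1, lt_max_of_lt_right (hM e he).2⟩]
  | par t u iht ihu =>
    obtain ⟨L, hL, ht⟩ := iht hp.1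
    obtain ⟨M, hM, hu⟩ := ihu hp.2
    exact ⟨expand L M, closed_depth_expand hL hM, (ht.par hu).trans (.par_sumPre hEL L M)⟩

end HeadNormalForms

theorem groundComplete {A : Type} [DecidableEq A] {E : Set (Eqn A)} (hE₀ : E0 A ⊆ E)
    (hEL : EL A ⊆ E) (hE : SystemSound Bisim E) : GroundComplete Bisim E := by
  suffices ∀ n (p q : Tm A), p.depth + q.depth < n → Closed p → Closed q → Bisim p q →
      Deriv E p q from fun p q => this _ p q (Nat.lt_add_one _)
  intro n
  induction n with
  | zero => intro p q h; omega
  | succ n ih =>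
    intro p q hn hp hq hpq
    obtain ⟨L, hL, hpL⟩ := exists_deriv_sumPre hE₀ hEL hp
    obtain ⟨M, hM, hqM⟩ := exists_deriv_sumPre hE₀ hEL hq
    have hLM : Bisim (sumPre L) (sumPre M) :=
      ((hpL.bisim hE hp (closed_sumPre fun e he => (hL e he).1)).symm.trans hpq).trans
        (hqM.bisim hE hq (closed_sumPre fun f hf => (hM f hf).1))
    refine hpL.trans ((Deriv.sumPre_of_bisim hE₀ hLM fun e he f hf hef => ?_).trans hqM.symm)
    have := (hL e he).2
    have := (hM f hf).2
    exact ih e.2 f.2 (by omega) (hL e he).1 (hM f hf).1 hef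

/-- **Hennessy–Milner theorem**: the axiom system `E₀ ∪ {EL}` is sound and
ground-complete modulo bisimilarity over CCS. -/
theorem stmt_2 (A : Type) [DecidableEq A] :
    SystemSound Bisim (E0 A ∪ EL A) ∧ GroundComplete Bisim (E0 A ∪ EL A) := by
  have hsound : SystemSound Bisim (E0 A ∪ EL A) :=
    fun e he => he.elim (systemSound_E0 e) (systemSound_EL e)
  exact ⟨hsound, groundComplete Set.subset_union_left Set.subset_union_right hsound⟩
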